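/- arXiv:1912.07583 — 3 statements merged into one kernel-verified Lean document; each statement's English description precedes it below -/
import Mathlib

section
/- Let X be a global 2-torsion group law and A an elementary abelian 2-group with linearly independent characters V₁, ..., V_n ∈ A* (A* = Hom(A, C₂) as 𝔽₂-vector space). Then the sequence of Euler classes (e_{V₁}, ..., e_{V_n}) is a regular sequence in X(A), and it generates the kernel of the restriction map X(A) → X(∩ᵢ ker Vᵢ). -/
open CategoryTheory Opposite

/-- The category of elementary abelian 2-groups, modeled as finite `ℤ/2`-vector spaces. -/
abbrev EA2 : Type 1 := FGModuleCat (ZMod 2)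

/-- The cyclic group `C₂` of order 2. -/
noncomputable def C2 : EA2 := FGModuleCat.of (ZMod 2) (ZMod 2)

/-- The trivial elementary abelian 2-group. -/
noncomputable def trivGrp : EA2 := FGModuleCat.of (ZMod 2) PUnit

/-- The kernel of a character `V : A → C₂`, as an elementary abelian 2-group. -/
noncomputable def kerObj {A : EA2} (V : A ⟶ C2) : EA2 :=
  FGModuleCat.of (ZMod 2) (LinearMap.ker V.hom.hom)

/-- The inclusion `ker V ↪ A`. -/
noncomputable def kerIncl {A : EA2} (V : A ⟶ C2) : kerObj V ⟶ A :=
  FGModuleCat.ofHom (LinearMap.ker V.hom.hom).subtype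

/-- A global 2-torsion group law: a contravariant functor `X` from elementary abelian
2-groups to commutative rings together with a coordinate `e ∈ X(C₂)` such that for every
elementary abelian 2-group `A` and nontrivial character `V : A → C₂` the sequence
`0 → X(A) --(·e_V)--> X(A) --res--> X(ker V) → 0` is exact, where `e_V = X(V)(e)`. -/
structure GlobalTwoTorsionGroupLaw where
  X : EA2ᵒᵖ ⥤ CommRingCat
  e : X.obj (op C2)
  euler_regular : ∀ (A : EA2) (V : A ⟶ C2), V ≠ 0 →
    Function.Injective (fun x : X.obj (op A) => x * X.map V.op e)
  euler_exact : ∀ (A : EA2) (V : A ⟶ C2), V ≠ 0 → ∀ x : X.obj (op A),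
    X.map (kerIncl V).op x = 0 ↔ ∃ y : X.obj (op A), x = y * X.map V.op e
  res_surjective : ∀ (A : EA2) (V : A ⟶ C2), V ≠ 0 →
    Function.Surjective (X.map (kerIncl V).op)

/-- The intersection `∩ᵢ ker Vᵢ` of the kernels of a family of characters. -/
noncomputable def interSub {A : EA2} {n : ℕ} (V : Fin n → (A ⟶ C2)) :
    Submodule (ZMod 2) A :=
  ⨅ i, LinearMap.ker (V i).hom.hom

/-- The intersection `∩ᵢ ker Vᵢ`, as an elementary abelian 2-group. -/
noncomputable def interObj {A : EA2} {n : ℕ} (V : Fin n → (A ⟶ C2)) : EA2 :=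
  FGModuleCat.of (ZMod 2) (interSub V)

/-- The inclusion `∩ᵢ ker Vᵢ ↪ A`. -/
noncomputable def interIncl {A : EA2} {n : ℕ} (V : Fin n → (A ⟶ C2)) : interObj V ⟶ A :=
  FGModuleCat.ofHom (interSub V).subtype

/-!
Induct on `n`. Restriction along `ker V₀ ↪ A` is surjective with kernel `(e_{V₀})`, so it
identifies `X(A) ⧸ (e_{V₀})` with `X(ker V₀)`, carrying `e_{Vᵢ}` to `e_{Vᵢ|ker V₀}`. The restricted
characters `Vᵢ|ker V₀` (`i ≥ 1`) are still linearly independent, because the characters vanishing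
on `ker V₀` are exactly the multiples of `V₀`, and the intersection of their kernels is
`∩ᵢ ker Vᵢ`. Both claims therefore follow from the induction hypothesis for `ker V₀`.
-/

open scoped Pointwise
open RingTheory.Sequence

section Ring

variable {R S T : Type*} [CommRing R] [CommRing S] [CommRing T]

lemma isWeaklyRegular_cons_of_ker_eq_span_singleton {f : R →+* S}
    (hf : Function.Surjective f) {r : R} (hker : RingHom.ker f = Ideal.span {r})
    (hr : IsSMulRegular R r) {rs : List R} (hrs : IsWeaklyRegular S (rs.map f)) :
    IsWeaklyRegular R (r :: rs) := by
  have hquot : (r • ⊤ : Submodule R R) = RingHom.ker f := by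
    rw [← Submodule.ideal_span_singleton_smul, smul_eq_mul, Ideal.mul_top, hker]
  let e : QuotSMulTop r R ≃+* S :=
    (Ideal.quotEquivOfEq hquot).trans (RingHom.quotientKerEquivOfSurjective hf)
  have he (x : R) : e (Submodule.Quotient.mk x) = f x := by
    change RingHom.quotientKerEquivOfSurjective hf (Ideal.quotEquivOfEq hquot
      (Ideal.Quotient.mk _ x)) = f x
    rw [Ideal.quotEquivOfEq_mk]
    exact RingHom.kerLift_mk f x
  refine .cons hr ((e.toAddEquiv.isWeaklyRegular_congr ?_).mpr hrs)
  refine List.forall₂_map_right_iff.mpr (List.forall₂_same.mpr fun a _ x => ?_)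
  obtain ⟨y, rfl⟩ := Submodule.Quotient.mk_surjective _ x
  rw [← Submodule.Quotient.mk_smul, smul_eq_mul, RingEquiv.toAddEquiv_eq_coe,
    RingEquiv.coe_toAddEquiv, he, he, map_mul, smul_eq_mul]

lemma RingHom.ker_comp_eq_span_insert {f : R →+* S} (hf : Function.Surjective f) {r : R}
    (hker : RingHom.ker f = Ideal.span {r}) {g : S →+* T} {s : Set R}
    (hg : RingHom.ker g = Ideal.span (f '' s)) :
    RingHom.ker (g.comp f) = Ideal.span (insert r s) := by
  rw [← RingHom.comap_ker, hg, ← Ideal.map_span, Ideal.comap_map_of_surjective f hf,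
    ← RingHom.ker_eq_comap_bot, hker, Ideal.span_insert, sup_comm]

end Ring

lemma LinearIndependent.comp_subtype_ker_tail {K V : Type*} [Field K] [AddCommGroup V]
    [Module K V] {n : ℕ} {φ : Fin (n + 1) → Module.Dual K V} (h : LinearIndependent K φ) :
    LinearIndependent K fun i : Fin n => (φ i.succ).comp (LinearMap.ker (φ 0)).subtype := by
  obtain ⟨htail, h0⟩ := linearIndependent_finSucc.mp h
  have hann : (LinearMap.ker (φ 0)).dualAnnihilator ≤ K ∙ φ 0 := fun ψ hψ => by
    have hle : ⨅ _ : Unit, LinearMap.ker (φ 0) ≤ LinearMap.ker ψ := by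
      simpa [SetLike.le_def] using (Submodule.mem_dualAnnihilator ψ).mp hψ
    simpa using mem_span_of_iInf_ker_le_ker hle
  exact htail.map (f := (LinearMap.ker (φ 0)).dualRestrict)
    (((Submodule.disjoint_span_singleton' (h.ne_zero 0)).mpr h0).mono_right hann)

lemma CategoryTheory.Functor.injective_map_op_of_comp_eq_id {C : Type*} [Category C]
    (F : Cᵒᵖ ⥤ CommRingCat) {a b : C} {f : a ⟶ b} {s : b ⟶ a} (h : s ≫ f = 𝟙 b) :
    Function.Injective (F.map f.op) := by
  refine Function.LeftInverse.injective (g := F.map s.op) fun x => ?_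
  rw [← CommRingCat.comp_apply, ← F.map_comp, ← op_comp, h, op_id, F.map_id,
    CommRingCat.id_apply]

section Characters

variable {A : EA2} {n : ℕ}

lemma linearIndependent_kerIncl_comp_tail {V : Fin (n + 1) → (A ⟶ C2)}
    (hV : LinearIndependent (ZMod 2) V) :
    LinearIndependent (ZMod 2) fun i : Fin n => kerIncl (V 0) ≫ V i.succ := by
  let e (B : EA2) : (B ⟶ C2) ≃ₗ[ZMod 2] Module.Dual (ZMod 2) B :=
    InducedCategory.homLinearEquiv.trans ModuleCat.homLinearEquiv
  exact .of_comp (e _).toLinearMap (hV.map' (e A).toLinearMap (e A).ker).comp_subtype_ker_tail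

noncomputable def interInclSection (V : Fin 0 → (A ⟶ C2)) : A ⟶ interObj V :=
  FGModuleCat.ofHom
    { toFun a := ⟨a, (Submodule.mem_iInf _).mpr fun i => i.elim0⟩
      map_add' _ _ := rfl
      map_smul' _ _ := rfl }

lemma interInclSection_comp_interIncl (V : Fin 0 → (A ⟶ C2)) :
    interInclSection V ≫ interIncl V = 𝟙 A :=
  rfl

noncomputable def interToInterKer (V : Fin (n + 1) → (A ⟶ C2)) :
    interObj V ⟶ interObj fun i : Fin n => kerIncl (V 0) ≫ V i.succ :=
  FGModuleCat.ofHom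
    { toFun a := ⟨⟨a.1, (Submodule.mem_iInf _).mp a.2 0⟩, (Submodule.mem_iInf _).mpr fun i =>
        (Submodule.mem_iInf _).mp a.2 i.succ⟩
      map_add' _ _ := rfl
      map_smul' _ _ := rfl }

noncomputable def interKerToInter (V : Fin (n + 1) → (A ⟶ C2)) :
    (interObj fun i : Fin n => kerIncl (V 0) ≫ V i.succ) ⟶ interObj V :=
  FGModuleCat.ofHom
    { toFun b := ⟨b.1.1, (Submodule.mem_iInf _).mpr <|
        Fin.cases b.1.2 fun j => (Submodule.mem_iInf _).mp b.2 j⟩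
      map_add' _ _ := rfl
      map_smul' _ _ := rfl }

lemma interKerToInter_comp_interToInterKer (V : Fin (n + 1) → (A ⟶ C2)) :
    interKerToInter V ≫ interToInterKer V = 𝟙 _ :=
  rfl

lemma interIncl_succ (V : Fin (n + 1) → (A ⟶ C2)) :
    interIncl V = interToInterKer V ≫ interIncl _ ≫ kerIncl (V 0) :=
  rfl

end Characters

namespace GlobalTwoTorsionGroupLaw

variable (L : GlobalTwoTorsionGroupLaw) {A : EA2}

lemma isSMulRegular_euler {V : A ⟶ C2} (hV : V ≠ 0) :
    IsSMulRegular (L.X.obj (op A)) (L.X.map V.op L.e) :=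
  (isRightRegular_iff_isRegular.mp (L.euler_regular A V hV)).left

lemma ker_map_kerIncl {V : A ⟶ C2} (hV : V ≠ 0) :
    RingHom.ker (L.X.map (kerIncl V).op).hom = Ideal.span {L.X.map V.op L.e} := by
  ext x
  rw [RingHom.mem_ker, Ideal.mem_span_singleton']
  exact (L.euler_exact A V hV x).trans (exists_congr fun _ => eq_comm)

lemma map_euler_comp {B : EA2} (f : B ⟶ A) (V : A ⟶ C2) :
    L.X.map (f ≫ V).op L.e = L.X.map f.op (L.X.map V.op L.e) := by
  rw [op_comp, L.X.map_comp, CommRingCat.comp_apply]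

lemma ker_map_interIncl_succ {n : ℕ} (V : Fin (n + 1) → (A ⟶ C2)) :
    RingHom.ker (L.X.map (interIncl V).op).hom =
      RingHom.ker ((L.X.map (interIncl fun i : Fin n => kerIncl (V 0) ≫ V i.succ).op).hom.comp
        (L.X.map (kerIncl (V 0)).op).hom) := by
  rw [interIncl_succ, op_comp, op_comp, L.X.map_comp, L.X.map_comp, CommRingCat.hom_comp,
    CommRingCat.hom_comp, RingHom.ker_comp_of_injective]
  exact L.X.injective_map_op_of_comp_eq_id (interKerToInter_comp_interToInterKer V)

end GlobalTwoTorsionGroupLaw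

/-- For a global 2-torsion group law `X` and linearly independent
characters `V₁, ..., V_n ∈ A* = Hom(A, C₂)`, the Euler classes `(e_{V₁}, ..., e_{V_n})` form
a regular sequence in `X(A)` generating the kernel of the restriction
`X(A) → X(∩ᵢ ker Vᵢ)`. -/
theorem stmt12 (L : GlobalTwoTorsionGroupLaw) (A : EA2) (n : ℕ)
    (V : Fin n → (A ⟶ C2)) (hV : LinearIndependent (ZMod 2) V) :
    RingTheory.Sequence.IsWeaklyRegular (L.X.obj (op A))
      (List.ofFn fun i : Fin n => L.X.map (V i).op L.e) ∧
    RingHom.ker ((L.X.map (interIncl V).op).hom : L.X.obj (op A) →+* L.X.obj (op (interObj V)))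
      = Ideal.span (Set.range fun i : Fin n => L.X.map (V i).op L.e) := by
  induction n generalizing A with
  | zero =>
    refine ⟨.nil _ _, ?_⟩
    rw [Set.range_eq_empty, Ideal.span_empty, ← RingHom.injective_iff_ker_eq_bot]
    exact L.X.injective_map_op_of_comp_eq_id (interInclSection_comp_interIncl V)
  | succ n ih =>
    have hV0 : V 0 ≠ 0 := hV.ne_zero 0
    have hres := L.res_surjective A (V 0) hV0
    obtain ⟨hreg, hker⟩ := ih _ _ (linearIndependent_kerIncl_comp_tail hV)
    simp only [L.map_euler_comp] at hreg hker
    constructor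
    · rw [List.ofFn_succ]
      refine isWeaklyRegular_cons_of_ker_eq_span_singleton hres (L.ker_map_kerIncl hV0)
        (L.isSMulRegular_euler hV0) ?_
      rw [List.map_ofFn]
      exact hreg
    · rw [L.ker_map_interIncl_succ, Fin.range_fin_succ]
      refine RingHom.ker_comp_eq_span_insert hres (L.ker_map_kerIncl hV0) ?_
      rw [hker, ← Set.range_comp]
      rfl
end

section
/- Let X be a global 2-torsion group law. Writing e_{1,0}, e_{0,1}, e_{1,1} ∈ X(C₂×C₂) for the Euler classes of the two projections and the multiplication map C₂×C₂ → C₂, there exists x' ∈ X(C₂×C₂) with e_{1,1} = e_{1,0} + e_{0,1} + x'·e_{1,0}·e_{0,1}. -/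
open CategoryTheory Opposite

/-- The Klein four-group `C₂ × C₂`. -/
noncomputable def C2xC2 : EA2 := FGModuleCat.of (ZMod 2) (ZMod 2 × ZMod 2)

/-- The first projection `C₂ × C₂ → C₂`. -/
noncomputable def pr1 : C2xC2 ⟶ C2 := FGModuleCat.ofHom (LinearMap.fst (ZMod 2) (ZMod 2) (ZMod 2))

/-- The second projection `C₂ × C₂ → C₂`. -/
noncomputable def pr2 : C2xC2 ⟶ C2 := FGModuleCat.ofHom (LinearMap.snd (ZMod 2) (ZMod 2) (ZMod 2))

/-- The multiplication character `C₂ × C₂ → C₂`, `(a,b) ↦ ab`. -/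
noncomputable def mul11 : C2xC2 ⟶ C2 :=
  FGModuleCat.ofHom (LinearMap.fst (ZMod 2) (ZMod 2) (ZMod 2) + LinearMap.snd (ZMod 2) (ZMod 2) (ZMod 2))

/-!
The difference `e_{V+W} - e_V - e_W` restricts to zero on `ker V` (where `V + W` and `W` agree
and `V` vanishes) and likewise on `ker W`. Exactness on `ker V` makes it a multiple `y·e_V`;
restricting to `ker W`, where `V` stays nontrivial so that its Euler class is regular, forces `y`
to vanish there, so `y` is in turn a multiple of `e_W`.
-/

@[simp]
lemma kerIncl_comp_self {A : EA2} (V : A ⟶ C2) : kerIncl V ≫ V = 0 :=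
  FGModuleCat.hom_ext (LinearMap.ext fun x => x.2)

lemma id_C2_ne_zero : (𝟙 C2 : C2 ⟶ C2) ≠ 0 := fun h =>
  one_ne_zero (α := ZMod 2) (LinearMap.congr_fun (congrArg (fun f => f.hom.hom) h) (1 : ZMod 2))

namespace GlobalTwoTorsionGroupLaw

variable (L : GlobalTwoTorsionGroupLaw)

noncomputable def euler {A : EA2} (V : A ⟶ C2) : L.X.obj (op A) := L.X.map V.op L.e

lemma euler_comp {A B : EA2} (f : B ⟶ A) (V : A ⟶ C2) :
    L.euler (f ≫ V) = L.X.map f.op (L.euler V) := by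
  rw [euler, op_comp, L.X.map_comp]
  rfl

lemma euler_id : L.euler (𝟙 C2) = L.e := by
  simp [euler]

/-- The zero character factors through `ker (𝟙 C₂)`, where `e = 1 · e` restricts to zero. -/
lemma euler_zero (B : EA2) : L.euler (0 : B ⟶ C2) = 0 := by
  have hker : L.X.map (kerIncl (𝟙 C2)).op (L.euler (𝟙 C2)) = 0 :=
    (L.euler_exact C2 (𝟙 C2) id_C2_ne_zero _).mpr ⟨1, by simp [euler]⟩
  rw [← Limits.zero_comp (f := kerIncl (𝟙 C2) ≫ 𝟙 C2), euler_comp, euler_comp, hker, map_zero]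

lemma map_kerIncl_euler_add_sub {A : EA2} (V W : A ⟶ C2) :
    L.X.map (kerIncl V).op (L.euler (V + W) - L.euler V - L.euler W) = 0 := by
  rw [map_sub, map_sub, ← euler_comp, ← euler_comp, ← euler_comp, Preadditive.comp_add,
    kerIncl_comp_self, zero_add, euler_zero]
  ring

lemma exists_eq_mul_euler_mul_euler {A : EA2} {V W : A ⟶ C2} (hW : W ≠ 0)
    (hVW : kerIncl W ≫ V ≠ 0) {x : L.X.obj (op A)}
    (hxV : L.X.map (kerIncl V).op x = 0) (hxW : L.X.map (kerIncl W).op x = 0) :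
    ∃ z, x = z * L.euler V * L.euler W := by
  have hV : V ≠ 0 := by
    rintro rfl
    exact hVW Limits.comp_zero
  obtain ⟨y, rfl⟩ := (L.euler_exact A V hV x).mp hxV
  have hy : L.X.map (kerIncl W).op y = 0 := by
    apply L.euler_regular _ _ hVW
    show _ * L.euler (kerIncl W ≫ V) = 0 * _
    rw [euler_comp, zero_mul, ← map_mul]
    exact hxW
  obtain ⟨z, rfl⟩ := (L.euler_exact A W hW y).mp hy
  exact ⟨z, by rw [euler, euler]; ring⟩

theorem exists_euler_add_eq {A : EA2} {V W : A ⟶ C2} (hW : W ≠ 0) (hVW : kerIncl W ≫ V ≠ 0) :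
    ∃ z, L.euler (V + W) = L.euler V + L.euler W + z * L.euler V * L.euler W := by
  obtain ⟨z, hz⟩ := L.exists_eq_mul_euler_mul_euler hW hVW (L.map_kerIncl_euler_add_sub V W)
    (by simpa only [add_comm V W, sub_right_comm] using L.map_kerIncl_euler_add_sub W V)
  exact ⟨z, by linear_combination hz⟩

end GlobalTwoTorsionGroupLaw

lemma pr2_ne_zero : pr2 ≠ 0 := fun h =>
  one_ne_zero (α := ZMod 2)
    (LinearMap.congr_fun (congrArg (fun f => f.hom.hom) h) ((0 : ZMod 2), (1 : ZMod 2)))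

lemma kerIncl_pr2_comp_pr1_ne_zero : kerIncl pr2 ≫ pr1 ≠ 0 := fun h =>
  one_ne_zero (α := ZMod 2) (LinearMap.congr_fun (congrArg (fun f => f.hom.hom) h)
    ⟨((1 : ZMod 2), (0 : ZMod 2)), LinearMap.mem_ker.mpr rfl⟩)

lemma mul11_eq_pr1_add_pr2 : mul11 = pr1 + pr2 := rfl

/-- For a global 2-torsion group law `X`, with `e_{1,0}, e_{0,1}, e_{1,1}`
the Euler classes in `X(C₂×C₂)` of the two projections and the multiplication character,
there is `x'` with `e_{1,1} = e_{1,0} + e_{0,1} + x'·e_{1,0}·e_{0,1}`. -/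
theorem stmt14 (L : GlobalTwoTorsionGroupLaw) :
    ∃ x' : L.X.obj (op C2xC2),
      L.X.map mul11.op L.e
        = L.X.map pr1.op L.e + L.X.map pr2.op L.e
          + x' * L.X.map pr1.op L.e * L.X.map pr2.op L.e := by
  rw [mul11_eq_pr1_add_pr2]
  exact L.exists_euler_add_eq pr2_ne_zero kerIncl_pr2_comp_pr1_ne_zero
end

section
/- Let f : X → Y be a natural transformation of functors from elementary abelian 2-groups^op to commutative rings, both equipped with coordinates making them global 2-torsion group laws, with f preserving coordinates. If for every elementary abelian 2-group A the induced map Φ^A(f) : X(A)[e_V^{-1} | 0 ≠ V ∈ A*] → Y(A)[e_V^{-1} | 0 ≠ V ∈ A*] is a ring isomorphism, then f(A) : X(A) → Y(A) is an isomorphism for every A. -/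
open CategoryTheory Opposite


/-- The multiplicative set of Euler classes of nontrivial characters of `A`
(the geometric fixed points `Φ^A` are obtained by inverting it). -/
def eulerMonoid (X : EA2ᵒᵖ ⥤ CommRingCat) (e : X.obj (op C2)) (A : EA2) :
    Submonoid (X.obj (op A)) :=
  Submonoid.closure {x | ∃ V : A ⟶ C2, V ≠ 0 ∧ x = X.map V.op e}

/-! Euler classes are non-zero-divisors, so `X(A)` embeds in `Φ^A(X)`: injectivity of `f` follows
from that of `Φ^A(f)`. For surjectivity, `Φ^A(f)` being onto writes every `y ∈ Y(A)` as
`y · f(s) = f(x)` with `s` a product of Euler classes, and it remains to cancel Euler classes one at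
a time: if `y · e_V = f(x)`, then `x` restricts to `0` on `ker V` (because `f` is injective there),
so `x = x' · e_V` by exactness, and `y = f(x')` since `e_V` is regular in `Y(A)`. -/

theorem mem_range_of_mul_mem_range_of_mem_closure {R R' : Type*} [CommMonoid R] [CommMonoid R']
    (φ : R →* R') {G : Set R} (hG : ∀ g ∈ G, ∀ y, y * φ g ∈ Set.range φ → y ∈ Set.range φ)
    {s : R} (hs : s ∈ Submonoid.closure G) (y : R') (h : y * φ s ∈ Set.range φ) :
    y ∈ Set.range φ := by
  induction hs using Submonoid.closure_induction generalizing y with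
  | mem g hg => exact hG g hg y h
  | one => simpa using h
  | mul s t _ _ ihs iht => exact ihs y (iht (y * φ s) (by rwa [mul_assoc, ← map_mul]))

section Localization

variable {R R' : Type*} [CommRing R] [CommRing R'] {S : Submonoid R} {T : Submonoid R'}
  (φ : R →+* R') (hST : S ≤ T.comap φ)

include hST in
theorem injective_of_injective_localization_map (hS : S ≤ nonZeroDivisors R)
    (h : Function.Injective
      (IsLocalization.map (Localization T) φ hST : Localization S →+* Localization T)) :
    Function.Injective φ := by
  intro x y hxy
  apply IsLocalization.injective (Localization S) hS
  apply h
  simp only [IsLocalization.map_eq, hxy]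

include hST in
theorem exists_mul_eq_of_surjective_localization_map (hT : T ≤ nonZeroDivisors R')
    (h : Function.Surjective
      (IsLocalization.map (Localization T) φ hST : Localization S →+* Localization T))
    (y : R') : ∃ x, ∃ s ∈ S, φ x = y * φ s := by
  obtain ⟨z, hz⟩ := h (algebraMap R' (Localization T) y)
  obtain ⟨⟨x, s⟩, rfl⟩ := IsLocalization.mk'_surjective S z
  rw [IsLocalization.map_mk', IsLocalization.mk'_eq_iff_eq_mul, ← map_mul] at hz
  exact ⟨x, s, s.2, IsLocalization.injective (Localization T) hT hz⟩

end Localization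

namespace GlobalTwoTorsionGroupLaw

theorem eulerMonoid_le_nonZeroDivisors (L : GlobalTwoTorsionGroupLaw) (A : EA2) :
    eulerMonoid L.X L.e A ≤ nonZeroDivisors (L.X.obj (op A)) := by
  refine Submonoid.closure_le.mpr ?_
  rintro _ ⟨V, hV, rfl⟩
  refine mem_nonZeroDivisors_iff_right.mpr fun x hx => L.euler_regular A V hV ?_
  simpa using hx

variable {L M : GlobalTwoTorsionGroupLaw} {f : L.X ⟶ M.X}

theorem app_euler (hf : f.app (op C2) L.e = M.e) {A : EA2} (V : A ⟶ C2) :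
    f.app (op A) (L.X.map V.op L.e) = M.X.map V.op M.e := by
  rw [NatTrans.naturality_apply, hf]

theorem mem_range_of_mul_euler_mem_range (hf : f.app (op C2) L.e = M.e) {A : EA2}
    {V : A ⟶ C2} (hV : V ≠ 0) (hker : Function.Injective (f.app (op (kerObj V))))
    (y : M.X.obj (op A)) (h : y * M.X.map V.op M.e ∈ Set.range (f.app (op A))) :
    y ∈ Set.range (f.app (op A)) := by
  obtain ⟨x, hx⟩ := h
  have hres_euler : M.X.map (kerIncl V).op (M.X.map V.op M.e) = 0 :=
    (M.euler_exact A V hV _).mpr ⟨1, (one_mul _).symm⟩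
  have hres : L.X.map (kerIncl V).op x = 0 := by
    apply hker
    rw [map_zero, NatTrans.naturality_apply, hx, map_mul, hres_euler, mul_zero]
  obtain ⟨x', rfl⟩ := (L.euler_exact A V hV x).mp hres
  refine ⟨x', M.euler_regular A V hV ?_⟩
  simpa only [map_mul, app_euler hf] using hx

end GlobalTwoTorsionGroupLaw

open GlobalTwoTorsionGroupLaw in
/-- Whitehead theorem for global 2-torsion group laws. A coordinate
preserving morphism `f : X → Y` of global 2-torsion group laws that induces an isomorphism
on all geometric fixed points `Φ^A` (the localizations away from the Euler classes of
nontrivial characters) is itself an isomorphism at every `A`. -/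
theorem stmt16 (L M : GlobalTwoTorsionGroupLaw) (f : L.X ⟶ M.X)
    (hf : f.app (op C2) L.e = M.e)
    (hle : ∀ A : EA2, eulerMonoid L.X L.e A ≤
      (eulerMonoid M.X M.e A).comap ((f.app (op A)).hom : L.X.obj (op A) →+* M.X.obj (op A)))
    (hiso : ∀ A : EA2, Function.Bijective
      ((IsLocalization.map (M := eulerMonoid L.X L.e A) (T := eulerMonoid M.X M.e A)
          (Localization (eulerMonoid M.X M.e A))
          ((f.app (op A)).hom : L.X.obj (op A) →+* M.X.obj (op A)) (hle A)
        : Localization (eulerMonoid L.X L.e A) →+* Localization (eulerMonoid M.X M.e A)))) :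
    ∀ A : EA2, Function.Bijective (f.app (op A)) := by
  have hinj (A : EA2) : Function.Injective (f.app (op A)) :=
    injective_of_injective_localization_map _ (hle A) (eulerMonoid_le_nonZeroDivisors L A)
      (hiso A).injective
  refine fun A => ⟨hinj A, fun y => ?_⟩
  obtain ⟨x, s, hs, hxs⟩ := exists_mul_eq_of_surjective_localization_map _ (hle A)
    (eulerMonoid_le_nonZeroDivisors M A) (hiso A).surjective y
  refine mem_range_of_mul_mem_range_of_mem_closure (f.app (op A)).hom.toMonoidHom ?_ hs y ⟨x, hxs⟩
  rintro _ ⟨V, hV, rfl⟩ z hz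
  exact mem_range_of_mul_euler_mem_range hf hV (hinj _) z (by rwa [← app_euler hf V])
end
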